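/- With the setup of the L₃ code and a, b both nonzero, det(X_S X_Sᴴ)·det(X_T X_Tᴴ) = (|a|² + |b|²)(|σ(a)|² + |b|²)² > 0, where X_S = (a, b) is the first row and X_T is the Alamouti block with rows (σ(a), -conj(b)), (b, conj(σ(a))). -/

import Mathlib

/-!
For a square matrix, `det (A Aᴴ) = |det A|²`, and the Alamouti block `[[x, -ȳ], [y, x̄]]` has
determinant `|x|² + |y|²`. So both Gram determinants are (powers of) sums of squared norms, which
are positive once `b ≠ 0`.
-/

open Matrix ComplexConjugate

section RCLike

variable {𝕜 : Type*} [RCLike 𝕜]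

theorem Matrix.det_mul_conjTranspose_self {n : Type*} [Fintype n] [DecidableEq n]
    (A : Matrix n n 𝕜) : (A * Aᴴ).det = ((‖A.det‖ ^ 2 : ℝ) : 𝕜) := by
  rw [det_mul, det_conjTranspose, RCLike.star_def, RCLike.mul_conj, RCLike.ofReal_pow]

theorem det_row_mul_conjTranspose (x y : 𝕜) :
    (!![x, y] * !![x, y]ᴴ).det = ((‖x‖ ^ 2 + ‖y‖ ^ 2 : ℝ) : 𝕜) := by
  rw [det_fin_one, mul_apply, Fin.sum_univ_two]
  simp [RCLike.mul_conj]

def alamouti (x y : 𝕜) : Matrix (Fin 2) (Fin 2) 𝕜 :=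
  !![x, -conj y; y, conj x]

theorem det_alamouti (x y : 𝕜) : (alamouti x y).det = ((‖x‖ ^ 2 + ‖y‖ ^ 2 : ℝ) : 𝕜) := by
  rw [alamouti, det_fin_two_of, RCLike.ofReal_add, RCLike.ofReal_pow, RCLike.ofReal_pow,
    ← RCLike.mul_conj, ← RCLike.mul_conj]
  ring

theorem det_alamouti_mul_conjTranspose (x y : 𝕜) :
    (alamouti x y * (alamouti x y)ᴴ).det = (((‖x‖ ^ 2 + ‖y‖ ^ 2) ^ 2 : ℝ) : 𝕜) := by
  rw [det_mul_conjTranspose_self, det_alamouti, RCLike.norm_ofReal,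
    abs_of_nonneg (by positivity)]

end RCLike

theorem L3_parallel_full_diversity_general (k₀ k₁ k₂ k₃ : ℤ) (b : GaussianInt)
    (hb : b ≠ 0) :
    let ζ : ℂ := Complex.exp (2 * Real.pi * Complex.I / 8)
    let a : ℂ := k₀ + k₁ * ζ + k₂ * ζ^2 + k₃ * ζ^3
    let sa : ℂ := k₀ - k₁ * ζ + k₂ * ζ^2 - k₃ * ζ^3
    let XS : Matrix (Fin 1) (Fin 2) ℂ := !![a, (b : ℂ)]
    let XT : Matrix (Fin 2) (Fin 2) ℂ :=
      !![sa, -(starRingEnd ℂ) (b : ℂ); (b : ℂ), (starRingEnd ℂ) sa]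
    (XS * XSᴴ).det * (XT * XTᴴ).det =
      (((‖a‖^2 + ‖(b : ℂ)‖^2)
        * (‖sa‖^2 + ‖(b : ℂ)‖^2)^2 : ℝ) : ℂ) ∧
    0 < (‖a‖^2 + ‖(b : ℂ)‖^2)
        * (‖sa‖^2 + ‖(b : ℂ)‖^2)^2 := by
  intro ζ a sa XS XT
  have hb_norm : 0 < ‖(b : ℂ)‖ := norm_pos_iff.mpr (GaussianInt.toComplex_eq_zero.not.mpr hb)
  constructor
  · rw [det_row_mul_conjTranspose, show XT = alamouti sa b from rfl,
      det_alamouti_mul_conjTranspose, ← RCLike.ofReal_mul]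
    rfl
  · positivity

theorem L3_parallel_full_diversity (k₀ k₁ k₂ k₃ : ℤ) (b : GaussianInt)
    (ha : (k₀ : ℂ) + k₁ * Complex.exp (2 * Real.pi * Complex.I / 8)
        + k₂ * Complex.exp (2 * Real.pi * Complex.I / 8)^2
        + k₃ * Complex.exp (2 * Real.pi * Complex.I / 8)^3 ≠ 0)
    (hb : b ≠ 0) :
    let ζ : ℂ := Complex.exp (2 * Real.pi * Complex.I / 8)
    let a : ℂ := k₀ + k₁ * ζ + k₂ * ζ^2 + k₃ * ζ^3
    let sa : ℂ := k₀ - k₁ * ζ + k₂ * ζ^2 - k₃ * ζ^3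
    let XS : Matrix (Fin 1) (Fin 2) ℂ := !![a, (b : ℂ)]
    let XT : Matrix (Fin 2) (Fin 2) ℂ :=
      !![sa, -(starRingEnd ℂ) (b : ℂ); (b : ℂ), (starRingEnd ℂ) sa]
    (XS * XSᴴ).det * (XT * XTᴴ).det =
      (((‖a‖^2 + ‖(b : ℂ)‖^2)
        * (‖sa‖^2 + ‖(b : ℂ)‖^2)^2 : ℝ) : ℂ) ∧
    0 < (‖a‖^2 + ‖(b : ℂ)‖^2)
        * (‖sa‖^2 + ‖(b : ℂ)‖^2)^2 :=
  L3_parallel_full_diversity_general k₀ k₁ k₂ k₃ b hb
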